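/- arXiv:0709.3325 — 2 statements merged into one kernel-verified Lean document; each statement's English description precedes it below -/
import Mathlib

section
/- Let A be a unital commutative Banach algebra and let I_A^{[2]} denote the image of the multiplication map I_A ⊗̂ I_A → I_A. Then I_A^{[2]} = Im(τ_A). -/
noncomputable section

open scoped BigOperators

/-- A bundled Banach space over `ℂ`. -/
structure BanachSp where
  carrier : Type
  [ng : NormedAddCommGroup carrier]
  [ns : NormedSpace ℂ carrier]
  [cs : CompleteSpace carrier]

attribute [instance] BanachSp.ng BanachSp.ns BanachSp.cs

instance : CoeSort BanachSp Type := ⟨BanachSp.carrier⟩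

/-- `IsProjTensor ι` asserts that `T`, together with the bounded bilinear map `ι`, is a
realization of the completed projective tensor product `E ⊗̂ F`: the map `ι` is a
contractive bilinear map with dense linear span of elementary tensors, and every bounded
bilinear map out of `E × F` into a Banach space factors (necessarily uniquely) through `T`
without increase of norm.  These properties determine `T` up to isometric isomorphism. -/
structure IsProjTensor {E F T : Type*} [SeminormedAddCommGroup E] [NormedSpace ℂ E]
    [SeminormedAddCommGroup F] [NormedSpace ℂ F] [NormedAddCommGroup T] [NormedSpace ℂ T]
    (ι : E →L[ℂ] F →L[ℂ] T) : Prop where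
  complete : CompleteSpace T
  norm_tmul_le : ∀ x y, ‖ι x y‖ ≤ ‖x‖ * ‖y‖
  dense_span : Dense (Submodule.span ℂ (Set.range fun p : E × F => ι p.1 p.2) : Set T)
  lift : ∀ (G : Type) [NormedAddCommGroup G] [NormedSpace ℂ G] [CompleteSpace G]
      (φ : E →L[ℂ] F →L[ℂ] G),
      ∃ ψ : T →L[ℂ] G, ‖ψ‖ ≤ ‖φ‖ ∧ ∀ x y, ψ (ι x y) = φ x y

/-- Two seminormed spaces are *isomorphic as seminormed spaces* if there are mutually
inverse bounded (equivalently, continuous) linear maps between them. -/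
def IsBddIso (E F : Type*) [SeminormedAddCommGroup E] [NormedSpace ℂ E]
    [SeminormedAddCommGroup F] [NormedSpace ℂ F] : Prop :=
  ∃ (S : E →L[ℂ] F) (T : F →L[ℂ] E), (∀ x, T (S x) = x) ∧ (∀ y, S (T y) = y)

/-- The subquotient `Z/B` of a seminormed space, as a seminormed space. -/
abbrev SubQuot {F : Type*} [SeminormedAddCommGroup F] [Module ℂ F]
    (Z B : Submodule ℂ F) :=
  ↥Z ⧸ (B.comap Z.subtype)

end

/-!
`τ_A(u ⊗ a) = σ_A(u) · (1 ⊗ a - a ⊗ 1)`, so `τ_A` factors through the multiplication `μ` of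
`I_A ⊗̂ I_A` via `u ⊗ a ↦ σ_A u ⊗ (1 ⊗ a - a ⊗ 1)`. Conversely `σ_A(x ⊗ y) = (x ⊗ 1)(1 ⊗ y - y ⊗ 1)`
and `σ_A` fixes `I_A`, so for `v, w ∈ I_A` the product `v w` is `τ_A` of the image of `w ⊗ v` under
the bounded map `(x ⊗ y) ⊗ v ↦ (x ⊗ 1) v ⊗ y`; hence `μ` factors through `τ_A`.
-/

noncomputable section

namespace IsProjTensor

variable {E F T G : Type*} [SeminormedAddCommGroup E] [NormedSpace ℂ E]
  [SeminormedAddCommGroup F] [NormedSpace ℂ F] [NormedAddCommGroup T] [NormedSpace ℂ T]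
  [NormedAddCommGroup G] [NormedSpace ℂ G] {ι : E →L[ℂ] F →L[ℂ] T}

theorem ext_clm (h : IsProjTensor ι) {f g : T →L[ℂ] G} (hfg : ∀ x y, f (ι x y) = g (ι x y)) :
    f = g := by
  have hrange : Set.EqOn f g (Set.range fun p : E × F => ι p.1 p.2) := by
    rintro _ ⟨⟨x, y⟩, rfl⟩
    exact hfg x y
  have hspan : Set.EqOn f g (Submodule.span ℂ (Set.range fun p : E × F => ι p.1 p.2) : Set T) :=
    LinearMap.eqOn_span (f := (f : T →ₗ[ℂ] G)) (g := (g : T →ₗ[ℂ] G)) hrange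
  exact DFunLike.coe_injective <|
    Continuous.ext_on h.dense_span f.continuous g.continuous hspan

theorem ext_clm₂ {E' F' T' : Type*} [SeminormedAddCommGroup E'] [NormedSpace ℂ E']
    [SeminormedAddCommGroup F'] [NormedSpace ℂ F'] [NormedAddCommGroup T'] [NormedSpace ℂ T']
    {ι' : E' →L[ℂ] F' →L[ℂ] T'} (h : IsProjTensor ι) (h' : IsProjTensor ι')
    {f g : T →L[ℂ] T' →L[ℂ] G}
    (hfg : ∀ x y x' y', f (ι x y) (ι' x' y') = g (ι x y) (ι' x' y')) : f = g :=
  h.ext_clm fun x y => h'.ext_clm fun x' y' => hfg x y x' y'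

end IsProjTensor

namespace DiagonalIdeal

open ContinuousLinearMap

variable {A : Type*} {T T3 TI : Type} [NormedCommRing A] [NormedAlgebra ℂ A]
  [NormedAddCommGroup T] [NormedSpace ℂ T] [NormedAddCommGroup T3] [NormedSpace ℂ T3]
  [NormedAddCommGroup TI] [NormedSpace ℂ TI]
  {ι2 : A →L[ℂ] A →L[ℂ] T} {mul2 : T →L[ℂ] T →L[ℂ] T} {π : T →L[ℂ] A}
  {ι3 : T →L[ℂ] A →L[ℂ] T3} {τ : T3 →L[ℂ] T}

/-- The paper's `σ_A`. -/
def kerProj (ι2 : A →L[ℂ] A →L[ℂ] T) (π : T →L[ℂ] A) : T →L[ℂ] T :=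
  ContinuousLinearMap.id ℂ T - (ι2.flip 1).comp π

def univDeriv (ι2 : A →L[ℂ] A →L[ℂ] T) : A →L[ℂ] T :=
  ι2 1 - ι2.flip 1

@[simp]
theorem kerProj_apply (u : T) : kerProj ι2 π u = u - ι2 (π u) 1 := by
  simp [kerProj]

@[simp]
theorem univDeriv_apply (a : A) : univDeriv ι2 a = ι2 1 a - ι2 a 1 := by
  simp [univDeriv]

theorem kerProj_mem_ker (hπ : ∀ x y, π (ι2 x y) = x * y) (u : T) :
    kerProj ι2 π u ∈ LinearMap.ker (π : T →ₗ[ℂ] A) := by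
  simp [hπ]

theorem kerProj_of_mem_ker {u : T} (hu : u ∈ LinearMap.ker (π : T →ₗ[ℂ] A)) :
    kerProj ι2 π u = u := by
  have hπu : π u = 0 := hu
  simp [hπu]

theorem univDeriv_mem_ker (hπ : ∀ x y, π (ι2 x y) = x * y) (a : A) :
    univDeriv ι2 a ∈ LinearMap.ker (π : T →ₗ[ℂ] A) := by
  simp [hπ]

theorem tensorMul_comm (h2 : IsProjTensor ι2)
    (hmul2 : ∀ x y x' y', mul2 (ι2 x y) (ι2 x' y') = ι2 (x * x') (y * y')) (u w : T) :
    mul2 u w = mul2 w u := by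
  have : mul2 = mul2.flip := h2.ext_clm₂ h2 fun x y x' y' => by simp [hmul2, mul_comm]
  exact congrArg (· u w) this

theorem tensorMul_assoc (h2 : IsProjTensor ι2)
    (hmul2 : ∀ x y x' y', mul2 (ι2 x y) (ι2 x' y') = ι2 (x * x') (y * y')) (u v w : T) :
    mul2 (mul2 u v) w = mul2 u (mul2 v w) := by
  have elem : ∀ x y, (compL ℂ T T T (mul2.flip (ι2 x y))).comp mul2
      = ((compL ℂ T T T).flip (mul2.flip (ι2 x y))).comp mul2 := fun x y =>
    h2.ext_clm₂ h2 fun a b a' b' => by simp [hmul2, mul_assoc]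
  have : mul2 (mul2 u v) = (mul2 u).comp (mul2 v) :=
    h2.ext_clm fun x y => by simpa using congrArg (· u v) (elem x y)
  exact congrArg (· w) this

theorem map_tensorMul (h2 : IsProjTensor ι2)
    (hmul2 : ∀ x y x' y', mul2 (ι2 x y) (ι2 x' y') = ι2 (x * x') (y * y'))
    (hπ : ∀ x y, π (ι2 x y) = x * y) (u w : T) :
    π (mul2 u w) = π u * π w := by
  have : (compL ℂ T T A π).comp mul2 = bilinearComp (mul ℂ A) π π :=
    h2.ext_clm₂ h2 fun x y x' y' => by simp [hmul2, hπ]; ring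
  simpa using congrArg (· u w) this

theorem tensorMul_tmul_one_univDeriv
    (hmul2 : ∀ x y x' y', mul2 (ι2 x y) (ι2 x' y') = ι2 (x * x') (y * y')) (x y : A) :
    mul2 (ι2 x 1) (univDeriv ι2 y) = ι2 x y - ι2 (x * y) 1 := by
  simp [hmul2]

theorem tau_tmul (h2 : IsProjTensor ι2)
    (hmul2 : ∀ x y x' y', mul2 (ι2 x y) (ι2 x' y') = ι2 (x * x') (y * y'))
    (hπ : ∀ x y, π (ι2 x y) = x * y)
    (hτ : ∀ x y a, τ (ι3 (ι2 x y) a)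
        = ι2 x (y * a) - ι2 (x * y) a - ι2 (a * x) y + ι2 (a * x * y) 1) (u : T) (a : A) :
    τ (ι3 u a) = mul2 (kerProj ι2 π u) (univDeriv ι2 a) := by
  have : τ.comp (ι3.flip a) = (mul2.flip (univDeriv ι2 a)).comp (kerProj ι2 π) :=
    h2.ext_clm fun x y => by
      simp [hτ, hπ, hmul2, mul_comm x a, mul_comm (x * y) a, mul_assoc]
      abel
  exact congrArg (· u) this

theorem range_tau_le_range_mul [CompleteSpace TI] (h2 : IsProjTensor ι2)
    (hmul2 : ∀ x y x' y', mul2 (ι2 x y) (ι2 x' y') = ι2 (x * x') (y * y'))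
    (hπ : ∀ x y, π (ι2 x y) = x * y) (h3 : IsProjTensor ι3)
    (hτ : ∀ x y a, τ (ι3 (ι2 x y) a)
        = ι2 x (y * a) - ι2 (x * y) a - ι2 (a * x) y + ι2 (a * x * y) 1)
    {ιI : LinearMap.ker (π : T →ₗ[ℂ] A) →L[ℂ] LinearMap.ker (π : T →ₗ[ℂ] A) →L[ℂ] TI}
    {μ : TI →L[ℂ] T} (hμ : ∀ v w : LinearMap.ker (π : T →ₗ[ℂ] A), μ (ιI v w) = mul2 v w) :
    LinearMap.range (τ : T3 →ₗ[ℂ] T) ≤ LinearMap.range (μ : TI →ₗ[ℂ] T) := by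
  obtain ⟨f, -, hf⟩ := h3.lift TI <| bilinearComp ιI
    ((kerProj ι2 π).codRestrict _ (kerProj_mem_ker hπ))
    ((univDeriv ι2).codRestrict _ (univDeriv_mem_ker hπ))
  have hμf : μ.comp f = τ := h3.ext_clm fun u a => by
    simp only [comp_apply, hf, bilinearComp_apply, hμ, tau_tmul h2 hmul2 hπ hτ]
    rfl
  rw [← hμf]
  exact LinearMap.range_comp_le_range _ _

theorem exists_lift_tmul_one_mul [CompleteSpace T3] (h2 : IsProjTensor ι2) :
    ∃ Ψ : T →L[ℂ] T →L[ℂ] T3, ∀ x y v, Ψ (ι2 x y) v = ι3 (mul2 (ι2 x 1) v) y := by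
  obtain ⟨Ψ, -, hΨ⟩ :=
    h2.lift (T →L[ℂ] T3) (bilinearComp (compL ℂ T T T3) ι3.flip (mul2.comp (ι2.flip 1))).flip
  exact ⟨Ψ, fun x y v => by simp [hΨ]⟩

theorem tau_lift_apply (h2 : IsProjTensor ι2)
    (hmul2 : ∀ x y x' y', mul2 (ι2 x y) (ι2 x' y') = ι2 (x * x') (y * y'))
    (hπ : ∀ x y, π (ι2 x y) = x * y)
    (hτ : ∀ x y a, τ (ι3 (ι2 x y) a)
        = ι2 x (y * a) - ι2 (x * y) a - ι2 (a * x) y + ι2 (a * x * y) 1)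
    {Ψ : T →L[ℂ] T →L[ℂ] T3} (hΨ : ∀ x y v, Ψ (ι2 x y) v = ι3 (mul2 (ι2 x 1) v) y)
    {v : T} (hv : v ∈ LinearMap.ker (π : T →ₗ[ℂ] A)) (u : T) :
    τ (Ψ u v) = mul2 v (kerProj ι2 π u) := by
  have : τ.comp (Ψ.flip v) = (mul2 v).comp (kerProj ι2 π) := h2.ext_clm fun x y => by
    have hπv : π v = 0 := hv
    have hxv : mul2 (ι2 x 1) v ∈ LinearMap.ker (π : T →ₗ[ℂ] A) := by
      simp [map_tensorMul h2 hmul2 hπ, hπv]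
    calc τ (Ψ (ι2 x y) v) = mul2 (mul2 (ι2 x 1) v) (univDeriv ι2 y) := by
          rw [hΨ, tau_tmul h2 hmul2 hπ hτ, kerProj_of_mem_ker hxv]
      _ = mul2 v (mul2 (ι2 x 1) (univDeriv ι2 y)) := by
          rw [tensorMul_comm h2 hmul2 (ι2 x 1) v, tensorMul_assoc h2 hmul2]
      _ = mul2 v (kerProj ι2 π (ι2 x y)) := by
          rw [tensorMul_tmul_one_univDeriv hmul2]
          simp [hπ]
  exact congrArg (· u) this

theorem range_mul_le_range_tau [CompleteSpace T3] (h2 : IsProjTensor ι2)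
    (hmul2 : ∀ x y x' y', mul2 (ι2 x y) (ι2 x' y') = ι2 (x * x') (y * y'))
    (hπ : ∀ x y, π (ι2 x y) = x * y)
    (hτ : ∀ x y a, τ (ι3 (ι2 x y) a)
        = ι2 x (y * a) - ι2 (x * y) a - ι2 (a * x) y + ι2 (a * x * y) 1)
    {ιI : LinearMap.ker (π : T →ₗ[ℂ] A) →L[ℂ] LinearMap.ker (π : T →ₗ[ℂ] A) →L[ℂ] TI}
    (hI : IsProjTensor ιI)
    {μ : TI →L[ℂ] T} (hμ : ∀ v w : LinearMap.ker (π : T →ₗ[ℂ] A), μ (ιI v w) = mul2 v w) :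
    LinearMap.range (μ : TI →ₗ[ℂ] T) ≤ LinearMap.range (τ : T3 →ₗ[ℂ] T) := by
  obtain ⟨Ψ, hΨ⟩ := exists_lift_tmul_one_mul (ι3 := ι3) (mul2 := mul2) h2
  obtain ⟨g, -, hg⟩ := hI.lift T3 <| bilinearComp Ψ.flip
    (LinearMap.ker (π : T →ₗ[ℂ] A)).subtypeL (LinearMap.ker (π : T →ₗ[ℂ] A)).subtypeL
  have hτg : τ.comp g = μ := hI.ext_clm fun v w => by
    rw [comp_apply, hg, hμ, bilinearComp_apply, flip_apply, Submodule.subtypeL_apply,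
      Submodule.subtypeL_apply, tau_lift_apply h2 hmul2 hπ hτ hΨ v.2, kerProj_of_mem_ker w.2]
  rw [← hτg]
  exact LinearMap.range_comp_le_range _ _

end DiagonalIdeal

theorem harrison_paper_stmt_10_general
    (A : Type) [NormedCommRing A] [NormedAlgebra ℂ A]
    -- a realization of `A ⊗̂ A`, with its multiplication
    (T2 : BanachSp) (ι2 : A →L[ℂ] A →L[ℂ] (T2 : Type)) (h2 : IsProjTensor ι2)
    (mul2 : (T2 : Type) →L[ℂ] (T2 : Type) →L[ℂ] (T2 : Type))
    (hmul2 : ∀ x y x' y', mul2 (ι2 x y) (ι2 x' y') = ι2 (x * x') (y * y'))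
    -- the product map `π : A ⊗̂ A → A`
    (π : (T2 : Type) →L[ℂ] A) (hπ : ∀ x y, π (ι2 x y) = x * y)
    -- a realization of `A ⊗̂ A ⊗̂ A`
    (T3 : BanachSp) (ι3 : (T2 : Type) →L[ℂ] A →L[ℂ] (T3 : Type)) (h3 : IsProjTensor ι3)
    -- the map `τ_A`
    (τ : (T3 : Type) →L[ℂ] (T2 : Type))
    (hτ : ∀ x y a, τ (ι3 (ι2 x y) a)
        = ι2 x (y * a) - ι2 (x * y) a - ι2 (a * x) y + ι2 (a * x * y) 1)
    -- a realization of `I_A ⊗̂ I_A` and the induced multiplication map `I_A ⊗̂ I_A → A ⊗̂ A`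
    (TI : BanachSp)
    (ιI : ↥(LinearMap.ker (π : (T2 : Type) →ₗ[ℂ] A)) →L[ℂ] ↥(LinearMap.ker (π : (T2 : Type) →ₗ[ℂ] A)) →L[ℂ] (TI : Type))
    (hI : IsProjTensor ιI)
    (μ : (TI : Type) →L[ℂ] (T2 : Type))
    (hμ : ∀ v w : ↥(LinearMap.ker (π : (T2 : Type) →ₗ[ℂ] A)), μ (ιI v w) = mul2 ↑v ↑w) :
    LinearMap.range (μ : (TI : Type) →ₗ[ℂ] (T2 : Type)) = LinearMap.range (τ : (T3 : Type) →ₗ[ℂ] (T2 : Type)) :=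
  le_antisymm (DiagonalIdeal.range_mul_le_range_tau h2 hmul2 hπ hτ hI hμ)
    (DiagonalIdeal.range_tau_le_range_mul h2 hmul2 hπ h3 hτ hμ)

/-- Let `A` be a unital commutative Banach algebra, let `I_A` be the
kernel of the product map `π : A ⊗̂ A → A`, and let `τ_A : A ⊗̂ A ⊗̂ A → A ⊗̂ A` be
`τ_A(x ⊗ y ⊗ a) = x ⊗ ya − xy ⊗ a − ax ⊗ y + axy ⊗ 1` (with values in `I_A`).
If `I_A^{[2]}` denotes the image of the multiplication map `I_A ⊗̂ I_A → I_A`, then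
`I_A^{[2]} = Im(τ_A)`.  Here `T2`, `T3`, `TI` are realizations of the completed projective
tensor products `A ⊗̂ A`, `A ⊗̂ A ⊗̂ A` and `I_A ⊗̂ I_A`, and `mul2` is the canonical
multiplication of the Banach algebra `A ⊗̂ A`. -/
theorem harrison_paper_stmt_10
    (A : Type) [NormedCommRing A] [NormedAlgebra ℂ A] [CompleteSpace A]
    -- a realization of `A ⊗̂ A`, with its multiplication
    (T2 : BanachSp) (ι2 : A →L[ℂ] A →L[ℂ] (T2 : Type)) (h2 : IsProjTensor ι2)
    (mul2 : (T2 : Type) →L[ℂ] (T2 : Type) →L[ℂ] (T2 : Type))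
    (hmul2 : ∀ x y x' y', mul2 (ι2 x y) (ι2 x' y') = ι2 (x * x') (y * y'))
    -- the product map `π : A ⊗̂ A → A`
    (π : (T2 : Type) →L[ℂ] A) (hπ : ∀ x y, π (ι2 x y) = x * y)
    -- a realization of `A ⊗̂ A ⊗̂ A`
    (T3 : BanachSp) (ι3 : (T2 : Type) →L[ℂ] A →L[ℂ] (T3 : Type)) (h3 : IsProjTensor ι3)
    -- the map `τ_A`
    (τ : (T3 : Type) →L[ℂ] (T2 : Type))
    (hτ : ∀ x y a, τ (ι3 (ι2 x y) a)
        = ι2 x (y * a) - ι2 (x * y) a - ι2 (a * x) y + ι2 (a * x * y) 1)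
    -- a realization of `I_A ⊗̂ I_A` and the induced multiplication map `I_A ⊗̂ I_A → A ⊗̂ A`
    (TI : BanachSp)
    (ιI : ↥(LinearMap.ker (π : (T2 : Type) →ₗ[ℂ] A)) →L[ℂ] ↥(LinearMap.ker (π : (T2 : Type) →ₗ[ℂ] A)) →L[ℂ] (TI : Type))
    (hI : IsProjTensor ιI)
    (μ : (TI : Type) →L[ℂ] (T2 : Type))
    (hμ : ∀ v w : ↥(LinearMap.ker (π : (T2 : Type) →ₗ[ℂ] A)), μ (ιI v w) = mul2 ↑v ↑w) :
    LinearMap.range (μ : (TI : Type) →ₗ[ℂ] (T2 : Type)) = LinearMap.range (τ : (T3 : Type) →ₗ[ℂ] (T2 : Type)) :=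
  harrison_paper_stmt_10_general A T2 ι2 h2 mul2 hmul2 π hπ T3 ι3 h3 τ hτ TI ιI hI μ hμ

end
end

section
/- Let A = ℓ¹(ℤ₊) be the convolution algebra, and let q : A ⊗̂ A → ℓ¹(ℕ) be the bounded linear map determined by q(1⊗1) = 0 and q(z^k ⊗ z^l) = (l/(k+l)) z^{k+l} for k, l ∈ ℤ₊ with k+l ≥ 1. Then q is surjective, and ker(q) equals the space B_1(A,A) of Hochschild 1-boundaries, i.e. the image of d_1 : A ⊗̂ A ⊗̂ A → A ⊗̂ A, d_1(x⊗a_1⊗a_2) = xa_1⊗a_2 − x⊗a_1a_2 + a_2x⊗a_1. -/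
noncomputable section

open scoped ENNReal

/-- `z` exhibits the unital commutative Banach algebra `A` as the convolution algebra
`ℓ¹(ℤ₊)`: the `z k` are the standard basis vectors `z^k`, they satisfy `z^k z^l = z^{k+l}`
and `z^0 = 1`, and the induced identification with the sequence space `ℓ¹` is an isometric
linear bijection. -/
structure IsL1ZPlus (A : Type) [NormedCommRing A] [NormedAlgebra ℂ A] [CompleteSpace A]
    (z : ℕ → A) : Prop where
  one : z 0 = 1
  mul : ∀ k l, z k * z l = z (k + l)
  iso : ∃ φ : lp (fun _ : ℕ => ℂ) 1 ≃ₗᵢ[ℂ] A, ∀ k, φ (lp.single 1 k 1) = z k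

namespace lp

variable {𝕜 ι G : Type*} [NontriviallyNormedField 𝕜]
  [NormedAddCommGroup G] [NormedSpace 𝕜 G] [CompleteSpace G]

theorem summable_norm_of_one (f : lp (fun _ : ι => 𝕜) 1) : Summable fun i => ‖f i‖ := by
  simpa using (lp.memℓp f).summable (p := 1) (by norm_num)

theorem norm_eq_tsum_norm_of_one (f : lp (fun _ : ι => 𝕜) 1) : ‖f‖ = ∑' i, ‖f i‖ := by
  simpa using lp.norm_eq_tsum_rpow (p := 1) (by norm_num) f

theorem dense_span_single [DecidableEq ι] {p : ℝ≥0∞} [Fact (1 ≤ p)] (hp : p ≠ ⊤) :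
    Dense (Submodule.span 𝕜 (Set.range fun i => lp.single (E := fun _ : ι => 𝕜) p i 1) :
      Set (lp (fun _ : ι => 𝕜) p)) := by
  intro f
  refine mem_closure_of_tendsto (lp.hasSum_single hp f) (Filter.Eventually.of_forall fun s => ?_)
  refine Submodule.sum_mem _ fun i _ => ?_
  have hsingle : lp.single p i (f i) = f i • lp.single (E := fun _ : ι => 𝕜) p i 1 := by
    rw [← lp.single_smul, smul_eq_mul, mul_one]
  rw [hsingle]
  exact Submodule.smul_mem _ _ (Submodule.subset_span ⟨i, rfl⟩)

theorem exists_map_single_eq [DecidableEq ι] (v : ι → G) {C : ℝ} (hC : 0 ≤ C)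
    (hv : ∀ i, ‖v i‖ ≤ C) :
    ∃ L : lp (fun _ : ι => 𝕜) 1 →L[𝕜] G,
      ‖L‖ ≤ C ∧ ∀ i, L (lp.single (E := fun _ : ι => 𝕜) 1 i 1) = v i := by
  have hle (f : lp (fun _ : ι => 𝕜) 1) (i : ι) : ‖f i • v i‖ ≤ ‖f i‖ * C := by
    rw [norm_smul]; exact mul_le_mul_of_nonneg_left (hv i) (norm_nonneg _)
  have hsn (f : lp (fun _ : ι => 𝕜) 1) : Summable fun i => ‖f i • v i‖ :=
    .of_nonneg_of_le (fun _ => norm_nonneg _) (hle f) ((summable_norm_of_one f).mul_right C)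
  let L : lp (fun _ : ι => 𝕜) 1 →ₗ[𝕜] G :=
    { toFun f := ∑' i, f i • v i
      map_add' f g := by
        simp only [lp.coeFn_add, Pi.add_apply, add_smul]
        exact (hsn f).of_norm.tsum_add (hsn g).of_norm
      map_smul' c f := by
        simp only [lp.coeFn_smul, Pi.smul_apply, smul_eq_mul, mul_smul, RingHom.id_apply]
        exact (hsn f).of_norm.tsum_const_smul c }
  have hL (f : lp (fun _ : ι => 𝕜) 1) : ‖L f‖ ≤ C * ‖f‖ := calc
    ‖L f‖ ≤ ∑' i, ‖f i • v i‖ := norm_tsum_le_tsum_norm (hsn f)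
    _ ≤ ∑' i, ‖f i‖ * C := (hsn f).tsum_le_tsum (hle f) ((summable_norm_of_one f).mul_right C)
    _ = C * ‖f‖ := by rw [tsum_mul_right, norm_eq_tsum_norm_of_one, mul_comm]
  refine ⟨L.mkContinuous C hL, L.mkContinuous_norm_le hC hL, fun i => ?_⟩
  change ∑' j, lp.single (E := fun _ : ι => 𝕜) 1 i 1 j • v j = v i
  rw [tsum_eq_single i fun j hj => by rw [lp.single_apply_ne _ _ _ hj, zero_smul],
    lp.single_apply_self, one_smul]

end lp

section Recursion

variable {𝕜 X Y : Type*} [NormedField 𝕜] [NormedAddCommGroup X] [NormedSpace 𝕜 X]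
  [NormedAddCommGroup Y] [NormedSpace 𝕜 Y] (d : X →L[𝕜] Y) {M : Set Y} {r C : ℝ}

theorem ContinuousLinearMap.exists_seq_eq_smul_add_of_recursion
    (hstep : ∀ y ∈ M, ∃ a : 𝕜, ∃ y' ∈ M, ∃ x : X, ‖a‖ ≤ r ∧ ‖x‖ ≤ C ∧ y = a • y' + d x)
    {y₀ : Y} (hy₀ : y₀ ∈ M) :
    ∃ (c : ℕ → 𝕜) (x : ℕ → X), (∀ n, ‖c n‖ ≤ r ^ n) ∧ (∀ n, ‖x n‖ ≤ C) ∧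
      ∀ n, ∃ y ∈ M, y₀ = c n • y + d (∑ i ∈ Finset.range n, c i • x i) := by
  choose! a next hnext pre ha hpre hy using hstep
  have hr0 : 0 ≤ r := (norm_nonneg _).trans (ha y₀ hy₀)
  let orbit : ℕ → 𝕜 × Y := fun n => (fun p => (p.1 * a p.2, next p.2))^[n] (1, y₀)
  have orbit_succ (n : ℕ) : orbit (n + 1) = ((orbit n).1 * a (orbit n).2, next (orbit n).2) :=
    Function.iterate_succ_apply' _ _ _
  have hmem (n : ℕ) : (orbit n).2 ∈ M := by
    induction n with
    | zero => exact hy₀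
    | succ n ih => rw [orbit_succ]; exact hnext _ ih
  refine ⟨fun n => (orbit n).1, fun n => pre (orbit n).2, fun n => ?_,
    fun n => hpre _ (hmem n), fun n => ⟨(orbit n).2, hmem n, ?_⟩⟩ <;> dsimp only
  · induction n with
    | zero => simp [orbit]
    | succ n ih =>
      rw [orbit_succ, norm_mul, pow_succ]
      exact mul_le_mul ih (ha _ (hmem n)) (norm_nonneg _) (pow_nonneg hr0 n)
  · induction n with
    | zero => simp [orbit]
    | succ n ih =>
      rw [Finset.sum_range_succ, map_add, orbit_succ, ih]
      conv_lhs => rw [hy _ (hmem n)]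
      simp only [map_smul, smul_add, mul_smul]
      abel

theorem ContinuousLinearMap.exists_preimage_norm_le_of_recursion [CompleteSpace X] {B : ℝ}
    (hr : r < 1) (hB : ∀ y ∈ M, ‖y‖ ≤ B)
    (hstep : ∀ y ∈ M, ∃ a : 𝕜, ∃ y' ∈ M, ∃ x : X, ‖a‖ ≤ r ∧ ‖x‖ ≤ C ∧ y = a • y' + d x) :
    ∀ y ∈ M, ∃ x : X, ‖x‖ ≤ C / (1 - r) ∧ d x = y := by
  intro y₀ hy₀
  obtain ⟨c, x, hc, hx, hpartial⟩ := d.exists_seq_eq_smul_add_of_recursion hstep hy₀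
  choose y hyM hy using hpartial
  have hr0 : 0 ≤ r := (norm_nonneg _).trans (hc 1) |>.trans_eq (pow_one r)
  have hterm (n : ℕ) : ‖c n • x n‖ ≤ C * r ^ n := by
    rw [norm_smul, mul_comm]
    exact mul_le_mul (hx n) (hc n) (norm_nonneg _) ((norm_nonneg _).trans (hx n))
  have hgeom : Summable fun n => C * r ^ n := (summable_geometric_of_lt_one hr0 hr).mul_left C
  have hsum : Summable fun n => c n • x n := .of_norm_bounded hgeom hterm
  refine ⟨∑' n, c n • x n, ?_, ?_⟩
  · calc ‖∑' n, c n • x n‖ ≤ ∑' n, C * r ^ n := tsum_of_norm_bounded hgeom.hasSum hterm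
      _ = C / (1 - r) := by rw [tsum_mul_left, tsum_geometric_of_lt_one hr0 hr, div_eq_mul_inv]
  · have hrem : Filter.Tendsto (fun n => c n • y n) Filter.atTop (nhds 0) := by
      refine squeeze_zero_norm (fun n => ?_)
        (by simpa using (tendsto_pow_atTop_nhds_zero_of_lt_one hr0 hr).mul_const B)
      rw [norm_smul]
      exact mul_le_mul (hc n) (hB _ (hyM n)) (norm_nonneg _) (pow_nonneg hr0 n)
    have hlim : Filter.Tendsto (fun n => d (∑ i ∈ Finset.range n, c i • x i)) Filter.atTop
        (nhds (d (∑' n, c n • x n))) :=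
      (d.continuous.tendsto _).comp hsum.hasSum.tendsto_sum_nat
    simp only [fun n => eq_sub_iff_add_eq'.2 (hy n).symm] at hlim
    exact tendsto_nhds_unique hlim (by simpa using (tendsto_const_nhds (x := y₀)).sub hrem)

end Recursion

theorem IsProjTensor.ext_of_dense_span {E F T G : Type*} [SeminormedAddCommGroup E]
    [NormedSpace ℂ E] [SeminormedAddCommGroup F] [NormedSpace ℂ F] [NormedAddCommGroup T]
    [NormedSpace ℂ T] [NormedAddCommGroup G] [NormedSpace ℂ G] {ι : E →L[ℂ] F →L[ℂ] T}
    (h : IsProjTensor ι) {SE : Set E} {SF : Set F} (hE : Dense (Submodule.span ℂ SE : Set E))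
    (hF : Dense (Submodule.span ℂ SF : Set F)) {f g : T →L[ℂ] G}
    (hfg : ∀ x ∈ SE, ∀ y ∈ SF, f (ι x y) = g (ι x y)) : f = g := by
  have hleft (x : E) (hx : x ∈ SE) : f ∘L ι x = g ∘L ι x :=
    ContinuousLinearMap.ext_on hF (hfg x hx)
  have hright (y : F) : f ∘L ι.flip y = g ∘L ι.flip y :=
    ContinuousLinearMap.ext_on hE fun x hx => by simpa using congr($(hleft x hx) y)
  refine ContinuousLinearMap.ext_on h.dense_span ?_
  rintro _ ⟨⟨x, y⟩, rfl⟩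
  simpa using congr($(hright y) x)

namespace IsL1ZPlus

variable {A : Type} [NormedCommRing A] [NormedAlgebra ℂ A] [CompleteSpace A] {z : ℕ → A}

theorem norm_eq_one (hA : IsL1ZPlus A z) (k : ℕ) : ‖z k‖ = 1 := by
  obtain ⟨φ, hφ⟩ := hA.iso
  rw [← hφ k, φ.norm_map, lp.norm_single (by norm_num), norm_one]

theorem dense_span (hA : IsL1ZPlus A z) : Dense (Submodule.span ℂ (Set.range z) : Set A) := by
  obtain ⟨φ, hφ⟩ := hA.iso
  have hspan : Submodule.span ℂ (Set.range z) =
      (Submodule.span ℂ (Set.range fun k => lp.single (E := fun _ : ℕ => ℂ) 1 k 1)).map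
        (φ : lp (fun _ : ℕ => ℂ) 1 →ₗ[ℂ] A) := by
    rw [Submodule.map_span, ← Set.range_comp]
    exact congrArg _ (congrArg Set.range (funext fun k => (hφ k).symm))
  rw [hspan, Submodule.map_coe]
  exact φ.surjective.denseRange.dense_image φ.continuous (lp.dense_span_single (by simp))

theorem exists_bilinear_eq (hA : IsL1ZPlus A z) {G : Type*} [NormedAddCommGroup G]
    [NormedSpace ℂ G] [CompleteSpace G] (v : ℕ → ℕ → G) {C : ℝ} (hC : 0 ≤ C)
    (hv : ∀ k l, ‖v k l‖ ≤ C) : ∃ β : A →L[ℂ] A →L[ℂ] G, ∀ k l, β (z k) (z l) = v k l := by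
  obtain ⟨φ, hφ⟩ := hA.iso
  choose row hrow_norm hrow using fun k => lp.exists_map_single_eq (𝕜 := ℂ) (v k) hC (hv k)
  obtain ⟨L, -, hL⟩ := lp.exists_map_single_eq (𝕜 := ℂ) row hC hrow_norm
  let e : A →L[ℂ] lp (fun _ : ℕ => ℂ) 1 := φ.symm.toContinuousLinearEquiv
  refine ⟨L.bilinearComp e e, fun k l => ?_⟩
  simp [e, ← hφ, hL, hrow]

variable {T : Type*} [NormedAddCommGroup T] [NormedSpace ℂ T] {ι : A →L[ℂ] A →L[ℂ] T}

theorem ext_tensor (hA : IsL1ZPlus A z) (h : IsProjTensor ι) {G : Type*} [NormedAddCommGroup G]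
    [NormedSpace ℂ G] {f g : T →L[ℂ] G} (hfg : ∀ k l, f (ι (z k) (z l)) = g (ι (z k) (z l))) :
    f = g :=
  h.ext_of_dense_span hA.dense_span hA.dense_span (by rintro _ ⟨k, rfl⟩ _ ⟨l, rfl⟩; exact hfg k l)

theorem ext_tensor₃ (hA : IsL1ZPlus A z) (h : IsProjTensor ι) {T₃ : Type*} [NormedAddCommGroup T₃]
    [NormedSpace ℂ T₃] {ι₃ : T →L[ℂ] A →L[ℂ] T₃} (h₃ : IsProjTensor ι₃) {G : Type*}
    [NormedAddCommGroup G] [NormedSpace ℂ G] {f g : T₃ →L[ℂ] G}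
    (hfg : ∀ j k l, f (ι₃ (ι (z j) (z k)) (z l)) = g (ι₃ (ι (z j) (z k)) (z l))) : f = g := by
  refine h₃.ext_of_dense_span (SE := Set.univ) (by simp) hA.dense_span ?_
  rintro t - _ ⟨l, rfl⟩
  have hl : f ∘L ι₃.flip (z l) = g ∘L ι₃.flip (z l) := hA.ext_tensor h fun j k => hfg j k l
  exact congr($hl t)

theorem exists_tensor_map (hA : IsL1ZPlus A z) (h : IsProjTensor ι) {G : Type}
    [NormedAddCommGroup G] [NormedSpace ℂ G] [CompleteSpace G] (v : ℕ → ℕ → G) {C : ℝ}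
    (hC : 0 ≤ C) (hv : ∀ k l, ‖v k l‖ ≤ C) :
    ∃ σ : T →L[ℂ] G, ∀ k l, σ (ι (z k) (z l)) = v k l := by
  obtain ⟨β, hβ⟩ := hA.exists_bilinear_eq v hC hv
  obtain ⟨σ, -, hσ⟩ := h.lift G β
  exact ⟨σ, fun k l => by rw [hσ, hβ]⟩

end IsL1ZPlus

theorem LinearMap.ker_eq_range_of_homotopy {R X Y Z : Type*} [Ring R] [AddCommGroup X]
    [Module R X] [AddCommGroup Y] [Module R Y] [AddCommGroup Z] [Module R Z]
    {d : X →ₗ[R] Y} {q : Y →ₗ[R] Z} (σ : Y → X) (s : Z →ₗ[R] Y) (hqd : ∀ x, q (d x) = 0)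
    (hid : ∀ y, d (σ y) + s (q y) = y) : LinearMap.ker q = LinearMap.range d := by
  apply le_antisymm
  · intro y hy
    exact ⟨σ y, by simpa [LinearMap.mem_ker.1 hy] using hid y⟩
  · rintro _ ⟨x, rfl⟩
    exact hqd x

/-- `kerGen ι₂ z k l` is `(1 - s q) (z^k ⊗ z^l)`, where `s` is the right inverse
`z^m ↦ 1 ⊗ z^(m+1)` of `q`; since `0 / 0 = 0`, this includes `kerGen ι₂ z 0 0 = 1 ⊗ 1`. -/
def kerGen {A T₂ : Type*} [NormedRing A] [NormedSpace ℂ A] [NormedAddCommGroup T₂]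
    [NormedSpace ℂ T₂] (ι₂ : A →L[ℂ] A →L[ℂ] T₂) (z : ℕ → A) (k l : ℕ) : T₂ :=
  ι₂ (z k) (z l) - ((l : ℂ) / ((k : ℂ) + (l : ℂ))) • ι₂ (z 0) (z (k + l))

section Boundaries

variable {A T₂ T₃ : Type*} [NormedRing A] [NormedSpace ℂ A] [NormedAddCommGroup T₂]
  [NormedSpace ℂ T₂] [NormedAddCommGroup T₃] [NormedSpace ℂ T₃]
  {z : ℕ → A} {ι₂ : A →L[ℂ] A →L[ℂ] T₂} {ι₃ : T₂ →L[ℂ] A →L[ℂ] T₃} {d₁ : T₃ →L[ℂ] T₂}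

theorem d₁_basis (hmul : ∀ k l, z k * z l = z (k + l))
    (hd₁ : ∀ x a₁ a₂ : A, d₁ (ι₃ (ι₂ x a₁) a₂) = ι₂ (x * a₁) a₂ - ι₂ x (a₁ * a₂) + ι₂ (a₂ * x) a₁)
    (i j k : ℕ) : d₁ (ι₃ (ι₂ (z i) (z j)) (z k)) =
      ι₂ (z (i + j)) (z k) - ι₂ (z i) (z (j + k)) + ι₂ (z (k + i)) (z j) := by
  rw [hd₁, hmul, hmul, hmul]

theorem kerGen_add_left (hd₁ : ∀ i j k, d₁ (ι₃ (ι₂ (z i) (z j)) (z k)) =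
      ι₂ (z (i + j)) (z k) - ι₂ (z i) (z (j + k)) + ι₂ (z (k + i)) (z j))
    (j l : ℕ) : kerGen ι₂ z (j + l) l =
      (1 / 2 : ℂ) • kerGen ι₂ z j (l + l) + (1 / 2 : ℂ) • d₁ (ι₃ (ι₂ (z j) (z l)) (z l)) := by
  rw [hd₁, kerGen, kerGen, add_comm l j, ← add_assoc]
  push_cast
  module

theorem kerGen_add_kerGen_swap (hd₁ : ∀ i j k, d₁ (ι₃ (ι₂ (z i) (z j)) (z k)) =
      ι₂ (z (i + j)) (z k) - ι₂ (z i) (z (j + k)) + ι₂ (z (k + i)) (z j))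
    {k l : ℕ} (hkl : k + l ≠ 0) :
    kerGen ι₂ z k l + kerGen ι₂ z l k = d₁ (ι₃ (ι₂ (z 0) (z k)) (z l)) := by
  have hne : (k : ℂ) + l ≠ 0 := by exact_mod_cast hkl
  rw [hd₁, kerGen, kerGen, zero_add, add_zero, add_comm l k]
  have hsum : (l : ℂ) / (k + l) + k / (l + k) = 1 := by
    rw [add_comm (l : ℂ) k]; field_simp; ring
  linear_combination (norm := module) -hsum • ι₂ (z 0) (z (k + l))

theorem exists_kerGen_eq_smul_add (hd₁ : ∀ i j k, d₁ (ι₃ (ι₂ (z i) (z j)) (z k)) =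
      ι₂ (z (i + j)) (z k) - ι₂ (z i) (z (j + k)) + ι₂ (z (k + i)) (z j))
    (hι₃ : ∀ i j k, ‖ι₃ (ι₂ (z i) (z j)) (z k)‖ ≤ 1) (k l : ℕ) :
    ∃ (a : ℂ) (k' l' : ℕ) (x : T₃),
      ‖a‖ ≤ 1 / 2 ∧ ‖x‖ ≤ 3 / 2 ∧ kerGen ι₂ z k l = a • kerGen ι₂ z k' l' + d₁ x := by
  have hhalf (i j k : ℕ) : ‖(1 / 2 : ℂ) • ι₃ (ι₂ (z i) (z j)) (z k)‖ ≤ 1 / 2 := by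
    rw [norm_smul]; simpa using hι₃ i j k
  rcases le_or_gt l k with hlk | hkl
  · obtain ⟨j, rfl⟩ := Nat.exists_eq_add_of_le' hlk
    refine ⟨1 / 2, j, l + l, (1 / 2 : ℂ) • ι₃ (ι₂ (z j) (z l)) (z l), by norm_num,
      (hhalf j l l).trans (by norm_num), ?_⟩
    rw [map_smul, kerGen_add_left hd₁]
  · -- swap to `kerGen l k` with `k < l`, then halve
    obtain ⟨j, rfl⟩ := Nat.exists_eq_add_of_le' hkl.le
    refine ⟨-(1 / 2), j, k + k,
      ι₃ (ι₂ (z 0) (z k)) (z (j + k)) - (1 / 2 : ℂ) • ι₃ (ι₂ (z j) (z k)) (z k), by norm_num,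
      (norm_sub_le _ _).trans (by linarith [hι₃ 0 k (j + k), hhalf j k k]), ?_⟩
    rw [eq_sub_of_add_eq (kerGen_add_kerGen_swap hd₁ (by omega)),
      kerGen_add_left hd₁, map_sub, map_smul]
    module

theorem norm_kerGen_le (hι₂ : ∀ k l, ‖ι₂ (z k) (z l)‖ ≤ 1) (k l : ℕ) :
    ‖kerGen ι₂ z k l‖ ≤ 2 := by
  have hcoef : ‖(l : ℂ) / ((k : ℂ) + (l : ℂ))‖ ≤ 1 := by
    rw [norm_div]
    refine div_le_one_of_le₀ ?_ (norm_nonneg _)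
    rw [← Nat.cast_add, Complex.norm_natCast, Complex.norm_natCast]
    exact_mod_cast Nat.le_add_left l k
  calc ‖kerGen ι₂ z k l‖
      ≤ ‖ι₂ (z k) (z l)‖ + ‖(l : ℂ) / ((k : ℂ) + (l : ℂ))‖ * ‖ι₂ (z 0) (z (k + l))‖ := by
        rw [kerGen, ← norm_smul]; exact norm_sub_le _ _
    _ ≤ 1 + 1 * 1 := by gcongr <;> apply hι₂
    _ = 2 := by norm_num

theorem exists_d₁_eq_kerGen [CompleteSpace T₃] (hd₁ : ∀ i j k, d₁ (ι₃ (ι₂ (z i) (z j)) (z k)) =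
      ι₂ (z (i + j)) (z k) - ι₂ (z i) (z (j + k)) + ι₂ (z (k + i)) (z j))
    (hι₂ : ∀ k l, ‖ι₂ (z k) (z l)‖ ≤ 1) (hι₃ : ∀ i j k, ‖ι₃ (ι₂ (z i) (z j)) (z k)‖ ≤ 1)
    (k l : ℕ) : ∃ x : T₃, ‖x‖ ≤ 3 ∧ d₁ x = kerGen ι₂ z k l := by
  have key := d₁.exists_preimage_norm_le_of_recursion
    (M := Set.range fun p : ℕ × ℕ => kerGen ι₂ z p.1 p.2) (r := 1 / 2) (B := 2) (C := 3 / 2)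
    (by norm_num) (by rintro _ ⟨p, rfl⟩; exact norm_kerGen_le hι₂ p.1 p.2)
    (by
      rintro _ ⟨⟨k, l⟩, rfl⟩
      obtain ⟨a, k', l', x, ha, hx, h⟩ := exists_kerGen_eq_smul_add hd₁ hι₃ k l
      exact ⟨a, _, ⟨(k', l'), rfl⟩, x, ha, hx, h⟩)
    _ ⟨(k, l), rfl⟩
  norm_num at key
  exact key

variable {q : T₂ →L[ℂ] lp (fun _ : ℕ => ℂ) 1}

theorem q_basis (hq0 : q (ι₂ (z 0) (z 0)) = 0)
    (hq : ∀ k l : ℕ, 1 ≤ k + l →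
      q (ι₂ (z k) (z l)) = ((l : ℂ) / ((k : ℂ) + (l : ℂ))) • lp.single 1 (k + l - 1) 1)
    (k l : ℕ) :
    q (ι₂ (z k) (z l)) = ((l : ℂ) / ((k : ℂ) + (l : ℂ))) • lp.single 1 (k + l - 1) 1 := by
  rcases Nat.eq_zero_or_pos (k + l) with hkl | hkl
  · obtain ⟨rfl, rfl⟩ : k = 0 ∧ l = 0 := by omega
    simp [hq0]
  · exact hq k l hkl

theorem q_d₁_basis (hd₁ : ∀ i j k, d₁ (ι₃ (ι₂ (z i) (z j)) (z k)) =
      ι₂ (z (i + j)) (z k) - ι₂ (z i) (z (j + k)) + ι₂ (z (k + i)) (z j))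
    (hq : ∀ k l : ℕ,
      q (ι₂ (z k) (z l)) = ((l : ℂ) / ((k : ℂ) + (l : ℂ))) • lp.single 1 (k + l - 1) 1)
    (i j k : ℕ) : q (d₁ (ι₃ (ι₂ (z i) (z j)) (z k))) = 0 := by
  rw [hd₁, map_add, map_sub, hq, hq, hq,
    ← add_assoc i, add_comm k i, add_right_comm i k j]
  push_cast
  module

theorem leftInverse_of_map_single (hq : ∀ k l : ℕ,
      q (ι₂ (z k) (z l)) = ((l : ℂ) / ((k : ℂ) + (l : ℂ))) • lp.single 1 (k + l - 1) 1)
    {s : lp (fun _ : ℕ => ℂ) 1 →L[ℂ] T₂}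
    (hs : ∀ m, s (lp.single 1 m 1) = ι₂ (z 0) (z (m + 1))) :
    Function.LeftInverse q s := by
  suffices q ∘L s = .id ℂ _ from fun y => congr($this y)
  refine ContinuousLinearMap.ext_on (lp.dense_span_single (by simp)) ?_
  rintro _ ⟨m, rfl⟩
  have hm : (m : ℂ) + 1 ≠ 0 := by exact_mod_cast m.succ_ne_zero
  simp [hs, hq 0 (m + 1), hm]

theorem map_q_basis (hq : ∀ k l : ℕ,
      q (ι₂ (z k) (z l)) = ((l : ℂ) / ((k : ℂ) + (l : ℂ))) • lp.single 1 (k + l - 1) 1)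
    {s : lp (fun _ : ℕ => ℂ) 1 →L[ℂ] T₂}
    (hs : ∀ m, s (lp.single 1 m 1) = ι₂ (z 0) (z (m + 1))) (k l : ℕ) :
    s (q (ι₂ (z k) (z l))) = ((l : ℂ) / ((k : ℂ) + (l : ℂ))) • ι₂ (z 0) (z (k + l)) := by
  rw [hq, map_smul, hs]
  rcases Nat.eq_zero_or_pos (k + l) with hkl | hkl
  · obtain ⟨rfl, rfl⟩ : k = 0 ∧ l = 0 := by omega
    simp
  · rw [Nat.sub_add_cancel hkl]

end Boundaries

/-- Let `A = ℓ¹(ℤ₊)` be the convolution algebra and let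
`q : A ⊗̂ A → ℓ¹(ℕ)` be the bounded linear map determined by `q(1⊗1) = 0` and
`q(z^k ⊗ z^l) = (l/(k+l)) z^{k+l}` for `k + l ≥ 1`.  Then `q` is surjective and
`ker q = B_1(A,A)`, the image of the Hochschild boundary
`d_1(x ⊗ a₁ ⊗ a₂) = xa₁ ⊗ a₂ − x ⊗ a₁a₂ + a₂x ⊗ a₁`.
(The Banach space `ℓ¹(ℕ)`, `ℕ = {1,2,…}`, is modelled as `lp` over `ℕ`, the basis vector
`z^m`, `m ≥ 1`, corresponding to `lp.single 1 (m-1) 1`.) -/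
theorem harrison_paper_stmt_12
    (A : Type) [NormedCommRing A] [NormedAlgebra ℂ A] [CompleteSpace A]
    (z : ℕ → A) (hA : IsL1ZPlus A z)
    (T2 : BanachSp) (ι2 : A →L[ℂ] A →L[ℂ] (T2 : Type)) (h2 : IsProjTensor ι2)
    (T3 : BanachSp) (ι3 : (T2 : Type) →L[ℂ] A →L[ℂ] (T3 : Type)) (h3 : IsProjTensor ι3)
    (d1 : (T3 : Type) →L[ℂ] (T2 : Type))
    (hd1 : ∀ x a₁ a₂ : A, d1 (ι3 (ι2 x a₁) a₂)
        = ι2 (x * a₁) a₂ - ι2 x (a₁ * a₂) + ι2 (a₂ * x) a₁)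
    (q : (T2 : Type) →L[ℂ] lp (fun _ : ℕ => ℂ) 1)
    (hq0 : q (ι2 (z 0) (z 0)) = 0)
    (hq : ∀ k l : ℕ, 1 ≤ k + l →
      q (ι2 (z k) (z l)) = (((l : ℂ) / ((k : ℂ) + (l : ℂ)))) • lp.single 1 (k + l - 1) 1) :
    Function.Surjective q ∧ LinearMap.ker (q : (T2 : Type) →ₗ[ℂ] lp (fun _ : ℕ => ℂ) 1) = LinearMap.range (d1 : (T3 : Type) →ₗ[ℂ] (T2 : Type)) := by
  have hι2 (k l : ℕ) : ‖ι2 (z k) (z l)‖ ≤ 1 :=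
    (h2.norm_tmul_le _ _).trans_eq (by rw [hA.norm_eq_one, hA.norm_eq_one, one_mul])
  have hι3 (i j k : ℕ) : ‖ι3 (ι2 (z i) (z j)) (z k)‖ ≤ 1 :=
    (h3.norm_tmul_le _ _).trans (by rw [hA.norm_eq_one, mul_one]; exact hι2 i j)
  have hd1z := d₁_basis hA.mul hd1
  have hqz := q_basis hq0 hq
  obtain ⟨s, -, hs⟩ := lp.exists_map_single_eq (𝕜 := ℂ)
    (fun m => ι2 (z 0) (z (m + 1))) zero_le_one fun m => hι2 0 (m + 1)
  choose v hv_norm hv using exists_d₁_eq_kerGen hd1z hι2 hι3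
  obtain ⟨σ, hσ⟩ := hA.exists_tensor_map h2 v (by norm_num) hv_norm
  have hqd1 : q ∘L d1 = 0 := hA.ext_tensor₃ h2 h3 fun i j k => q_d₁_basis hd1z hqz i j k
  have hhomotopy : d1 ∘L σ + s ∘L q = .id ℂ _ := hA.ext_tensor h2 fun k l => by
    simp [hσ, hv, map_q_basis hqz hs, kerGen]
  exact ⟨(leftInverse_of_map_single hqz hs).surjective,
    LinearMap.ker_eq_range_of_homotopy σ s (fun t => congr($hqd1 t)) fun t => congr($hhomotopy t)⟩
end
end
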